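/- arXiv:2303.01824 — 2 statements merged into one kernel-verified Lean document; each statement's English description precedes it below -/
import Mathlib

section
/- Theorem 1, part (ii) (accentuating regime): let α ∈ [0,1), μ > 0, λ_tot > 0, r_f = μ/λ_tot, and define λ_A(s) = ((1−α)/2 + α·s)·λ_tot, λ_B(s) = ((1−α)/2 + α·(1−s))·λ_tot, and p_a(s) = λ_tot·(μ+λ_A(s))·((μ+λ_B(s))·s − λ_A(s)·μ/λ_tot) / (λ_A(s)·λ_B(s)·(2μ+λ_tot)) for s ∈ [0,1]. If r_f < (α − 1/2)/(1−α), then there exists s ∈ (1/2, 1] with p_a(s) < s; that is, frictions accentuate existing inequalities for at least some preference share. -/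
/-!
Writing `s = 1/2 + t`, the numerator of `s - p_a(s)` (over the positive denominator
`λ_A λ_B (2μ + λ_tot)`) factors as `λ_tot μ t (K - 2 λ_tot α² t²)` with
`K = (α - 1/2) λ_tot - (1 - α) μ`, and the friction condition `r_f < (α - 1/2)/(1 - α)` says
exactly that `K > 0`. Hence `p_a(s) < s` for every share `s` slightly above `1/2`.
-/

open Filter Topology

lemma affine_share_pos {α s : ℝ} (hα0 : 0 ≤ α) (hα1 : α < 1) (hs : 0 ≤ s) :
    0 < (1 - α) / 2 + α * s := by
  nlinarith [mul_nonneg hα0 hs]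

lemma friction_margin_pos {α μ L : ℝ} (hL : 0 < L) (hα1 : α < 1)
    (h : μ / L < (α - 1/2) / (1 - α)) :
    0 < (2 * α - 1) * L / 2 - (1 - α) * μ := by
  rw [div_lt_div_iff₀ hL (by linarith)] at h
  linarith

lemma mul_pa_denom_sub_pa_numer_eq {α μ L s A B : ℝ} (hL : L ≠ 0)
    (hA : A = ((1 - α) / 2 + α * s) * L) (hB : B = ((1 - α) / 2 + α * (1 - s)) * L) :
    s * (A * B * (2 * μ + L)) - L * (μ + A) * ((μ + B) * s - A * μ / L)
      = L * μ * (s - 1/2) *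
          (((2 * α - 1) * L / 2 - (1 - α) * μ) - 2 * L * α ^ 2 * (s - 1/2) ^ 2) := by
  subst hA hB
  field_simp
  ring

lemma exists_mem_Ioc_mul_sq_lt {K : ℝ} (c : ℝ) (hK : 0 < K) :
    ∃ t ∈ Set.Ioc (0 : ℝ) (1/2), c * t ^ 2 < K := by
  have hlim : Tendsto (fun t : ℝ => c * t ^ 2) (𝓝[>] 0) (𝓝 0) := by
    have hcont : Continuous fun t : ℝ => c * t ^ 2 := by fun_prop
    simpa using (hcont.tendsto 0).mono_left nhdsWithin_le_nhds
  have hIoc : ∀ᶠ t in 𝓝[>] (0 : ℝ), t ∈ Set.Ioc 0 (1/2) := Ioc_mem_nhdsGT (by norm_num)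
  exact (hIoc.and (hlim.eventually (gt_mem_nhds hK))).exists

/-- Theorem 1, part (ii) (accentuating regime): if `r_f < (α - 1/2)/(1 - α)`,
then there exists an equilibrium share `s ∈ (1/2, 1]` with `p_a(s) < s`:
frictions accentuate existing inequalities for some preference share. -/
theorem accentuating_regime
    (α μ lamtot rf : ℝ)
    (hα : α ∈ Set.Ico (0:ℝ) 1) (hμ : 0 < μ) (hlamtot : 0 < lamtot)
    (hrf : rf = μ / lamtot)
    (lamA lamB pa : ℝ → ℝ)
    (hlamA : ∀ s, lamA s = ((1 - α) / 2 + α * s) * lamtot)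
    (hlamB : ∀ s, lamB s = ((1 - α) / 2 + α * (1 - s)) * lamtot)
    (hpa : ∀ s, pa s =
      lamtot * (μ + lamA s) * ((μ + lamB s) * s - lamA s * μ / lamtot) /
        (lamA s * lamB s * (2 * μ + lamtot)))
    (hcond : rf < (α - 1/2) / (1 - α)) :
    ∃ s ∈ Set.Ioc (1/2 : ℝ) 1, pa s < s := by
  obtain ⟨hα0, hα1⟩ := hα
  have hK := friction_margin_pos hlamtot hα1 (hrf ▸ hcond)
  obtain ⟨t, ⟨ht0, ht⟩, hsmall⟩ := exists_mem_Ioc_mul_sq_lt (2 * lamtot * α ^ 2) hK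
  refine ⟨1/2 + t, ⟨by linarith, by linarith⟩, ?_⟩
  have hA : 0 < lamA (1/2 + t) := by
    rw [hlamA]; exact mul_pos (affine_share_pos hα0 hα1 (by linarith)) hlamtot
  have hB : 0 < lamB (1/2 + t) := by
    rw [hlamB]; exact mul_pos (affine_share_pos hα0 hα1 (by linarith)) hlamtot
  rw [hpa, div_lt_iff₀ (by positivity), ← sub_pos,
    mul_pa_denom_sub_pa_numer_eq hlamtot.ne' (hlamA _) (hlamB _), add_sub_cancel_left]
  exact mul_pos (by positivity) (sub_pos.2 hsmall)
end

section
/- With constant meeting rates, frictions reduce the variance of the firm size distribution: let r > 0, let ℓ : [0,1] → ℝ be square-integrable, and define s(y) = ∫₀¹ r(r+1)·ℓ(x)/(r + 2·d(x,y))² dx, where d(x,y) = min_{k∈ℤ} |x − y + k|. Then ∫₀¹ s(y) dy = ∫₀¹ ℓ(x) dx, and ∫₀¹ (s(y) − m)² dy ≤ ∫₀¹ (ℓ(x) − m)² dx where m = ∫₀¹ ℓ; that is, Var_y(s(y)) ≤ Var_x(ℓ(x)). -/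
/-!
Both sections of the kernel `K_r(d(x, y))` integrate to one: by translation invariance on the
circle each equals `2 ∫₀^{1/2} K_r = 1`. Hence `ℓ ↦ s` is a doubly stochastic integral operator.
Fubini together with the row normalisation preserves the mean. For the variance, the column
normalisation makes `K_r(d(·, y))` a probability density, so Jensen's inequality gives
`(s y - m)² ≤ ∫ K_r(d(x, y)) (ℓ x - m)² dx`; integrating in `y` and using the row normalisation
once more yields `∫ (ℓ - m)²`.
-/

open MeasureTheory

/-- Distance on the circle of circumference 1: `d(x,y) = min_{k ∈ ℤ} |x - y + k|`. -/
noncomputable def circleDist (x y : ℝ) : ℝ :=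
  sInf {v : ℝ | ∃ k : ℤ, v = |x - y + (k : ℝ)|}

open Function

theorem circleDist_eq_norm (x y : ℝ) :
    circleDist x y = ‖((x - y : ℝ) : UnitAddCircle)‖ := by
  refine le_antisymm (csInf_le ⟨0, ?_⟩ ⟨-round (x - y), ?_⟩) (le_csInf ⟨_, 0, rfl⟩ ?_)
  · rintro v ⟨k, rfl⟩
    exact abs_nonneg _
  · rw [UnitAddCircle.norm_eq]
    push_cast
    ring_nf
  · rintro v ⟨k, rfl⟩
    have hk : ((x - y + k : ℝ) : UnitAddCircle) = ((x - y : ℝ) : UnitAddCircle) := by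
      rw [AddCircle.coe_add, add_eq_left, ← zsmul_one, AddCircle.coe_zsmul, AddCircle.coe_period,
        smul_zero]
    rw [← hk]
    exact QuotientAddGroup.norm_mk_le_norm

theorem circleDist_comm (x y : ℝ) : circleDist x y = circleDist y x := by
  rw [circleDist_eq_norm, circleDist_eq_norm, ← norm_neg, ← AddCircle.coe_neg, neg_sub]

theorem circleDist_nonneg (x y : ℝ) : 0 ≤ circleDist x y :=
  (circleDist_eq_norm x y).symm ▸ norm_nonneg _

theorem continuous_circleDist : Continuous fun p : ℝ × ℝ => circleDist p.1 p.2 := by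
  simp only [circleDist_eq_norm]
  exact continuous_norm.comp
    ((AddCircle.continuous_mk' 1).comp (continuous_fst.sub continuous_snd))

theorem integral_comp_norm_unitAddCircle {g : ℝ → ℝ} (hg : ContinuousOn g (Set.Icc 0 (1 / 2)))
    (c : ℝ) :
    ∫ x in (0 : ℝ)..1, g ‖((x - c : ℝ) : UnitAddCircle)‖ = 2 * ∫ t in (0 : ℝ)..1 / 2, g t := by
  set F : ℝ → ℝ := fun u => g ‖(u : UnitAddCircle)‖
  have hF : Continuous F := hg.comp_continuous (continuous_norm.comp (AddCircle.continuous_mk' 1))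
    fun u => ⟨norm_nonneg _, by simpa using AddCircle.norm_le_half_period 1 one_ne_zero⟩
  have hF_periodic : Periodic F 1 := fun u => by simp only [F, AddCircle.coe_add_period]
  have hF_even : ∀ u, F (-u) = F u := fun u => by simp only [F, AddCircle.coe_neg, norm_neg]
  have hF_eq : Set.EqOn F g (Set.uIcc 0 (1 / 2)) := fun u hu => by
    rw [Set.uIcc_of_le (by norm_num)] at hu
    simp only [F]
    have hu_abs : |u| = u := abs_of_nonneg hu.1
    rw [(AddCircle.norm_coe_eq_abs_iff 1 one_ne_zero).2 (by norm_num [hu_abs, hu.2]), hu_abs]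
  calc ∫ x in (0 : ℝ)..1, F (x - c)
      = ∫ u in -(1 / 2)..-(1 / 2) + 1, F u := by
        rw [intervalIntegral.integral_comp_sub_right, zero_sub, sub_eq_neg_add,
          hF_periodic.intervalIntegral_add_eq]
    _ = (∫ u in -(1 / 2)..0, F u) + ∫ u in (0 : ℝ)..1 / 2, F u := by
        rw [intervalIntegral.integral_add_adjacent_intervals (hF.intervalIntegrable _ _)
          (hF.intervalIntegrable _ _)]
        norm_num
    _ = 2 * ∫ t in (0 : ℝ)..1 / 2, g t := by
        have h_left : ∫ u in -(1 / 2)..0, F u = ∫ u in (0 : ℝ)..1 / 2, F u := by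
          simpa only [hF_even, neg_zero] using
            (intervalIntegral.integral_comp_neg (a := 0) (b := 1 / 2) F).symm
        rw [h_left, intervalIntegral.integral_congr hF_eq, two_mul]

noncomputable def frictionKernel (r t : ℝ) : ℝ := r * (r + 1) / (r + 2 * t) ^ 2

theorem frictionKernel_nonneg {r : ℝ} (hr : 0 ≤ r) (t : ℝ) : 0 ≤ frictionKernel r t := by
  unfold frictionKernel; positivity

theorem continuousOn_frictionKernel {r : ℝ} (hr : 0 < r) :
    ContinuousOn (frictionKernel r) (Set.Ici 0) :=
  continuousOn_const.div (by fun_prop) fun t (ht : 0 ≤ t) => by positivity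

theorem integral_frictionKernel {r : ℝ} (hr : 0 < r) :
    ∫ t in (0 : ℝ)..1 / 2, frictionKernel r t = 1 / 2 := by
  have h_deriv : ∀ t ∈ Set.uIcc (0 : ℝ) (1 / 2),
      HasDerivAt (fun t => (r + 1) * t / (r + 2 * t)) (frictionKernel r t) t := by
    intro t ht
    rw [Set.uIcc_of_le (by norm_num)] at ht
    have hpos : 0 < r + 2 * t := by linarith [ht.1]
    refine (((hasDerivAt_id' t).const_mul (r + 1)).div
      (((hasDerivAt_id' t).const_mul 2).const_add r) hpos.ne').congr_deriv ?_
    unfold frictionKernel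
    field_simp
    ring
  have h_int : IntervalIntegrable (frictionKernel r) volume 0 (1 / 2) :=
    ((continuousOn_frictionKernel hr).mono fun t ht => by
      rw [Set.uIcc_of_le (by norm_num)] at ht; exact ht.1).intervalIntegrable
  rw [intervalIntegral.integral_eq_sub_of_hasDerivAt h_deriv h_int]
  field_simp
  ring

theorem integral_frictionKernel_circleDist {r : ℝ} (hr : 0 < r) (y : ℝ) :
    ∫ x in (0 : ℝ)..1, frictionKernel r (circleDist x y) = 1 := by
  simp only [circleDist_eq_norm]
  rw [integral_comp_norm_unitAddCircle
    ((continuousOn_frictionKernel hr).mono Set.Icc_subset_Ici_self), integral_frictionKernel hr]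
  norm_num

theorem sq_integral_mul_le_integral_mul_sq {α : Type*} [MeasurableSpace α] {ν : Measure α}
    {w f : α → ℝ} (hw0 : ∀ x, 0 ≤ w x) (hw1 : ∫ x, w x ∂ν = 1)
    (hwf : Integrable (fun x => w x * f x) ν) (hwf2 : Integrable (fun x => w x * f x ^ 2) ν) :
    (∫ x, w x * f x ∂ν) ^ 2 ≤ ∫ x, w x * f x ^ 2 ∂ν := by
  set c := ∫ x, w x * f x ∂ν
  have hw : Integrable w ν := integrable_of_integral_eq_one hw1
  have h_expand : ∫ x, w x * (f x - c) ^ 2 ∂ν = (∫ x, w x * f x ^ 2 ∂ν) - c ^ 2 := by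
    have h_pt : (fun x => w x * (f x - c) ^ 2)
        = fun x => w x * f x ^ 2 - 2 * c * (w x * f x) + c ^ 2 * w x := by
      funext x; ring
    have h_lin : Integrable (fun x => 2 * c * (w x * f x)) ν := hwf.const_mul _
    have h_diff : Integrable (fun x => w x * f x ^ 2 - 2 * c * (w x * f x)) ν := hwf2.sub h_lin
    rw [h_pt, integral_add h_diff (hw.const_mul _), integral_sub hwf2 h_lin,
      integral_const_mul, integral_const_mul, hw1]
    ring
  have h_nonneg : 0 ≤ ∫ x, w x * (f x - c) ^ 2 ∂ν :=
    integral_nonneg fun x => mul_nonneg (hw0 x) (sq_nonneg _)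
  linarith

section DoublyStochasticKernel

variable {X : Type*} [MeasurableSpace X] {μ : Measure X} {G : X → X → ℝ}

theorem integrable_kernel_mul [SFinite μ]
    (hG : AEStronglyMeasurable (uncurry G) (μ.prod μ)) (hG0 : ∀ x y, 0 ≤ G x y)
    (hrow : ∀ x, ∫ y, G x y ∂μ = 1) {φ : X → ℝ} (hφ : Integrable φ μ) :
    Integrable (fun p : X × X => G p.1 p.2 * φ p.1) (μ.prod μ) := by
  refine (integrable_prod_iff (hG.mul hφ.1.comp_fst)).2
    ⟨ae_of_all _ fun x => ?_, hφ.norm.congr (ae_of_all _ fun x => ?_)⟩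
  · show Integrable (fun y => G x y * φ x) μ
    exact (integrable_of_integral_eq_one (hrow x)).mul_const _
  · show ‖φ x‖ = ∫ y, ‖G x y * φ x‖ ∂μ
    simp only [norm_mul, Real.norm_of_nonneg (hG0 _ _), integral_mul_const, hrow, one_mul]

theorem integral_integral_kernel_mul [SFinite μ]
    (hG : AEStronglyMeasurable (uncurry G) (μ.prod μ)) (hG0 : ∀ x y, 0 ≤ G x y)
    (hrow : ∀ x, ∫ y, G x y ∂μ = 1) {φ : X → ℝ} (hφ : Integrable φ μ) :
    ∫ y, ∫ x, G x y * φ x ∂μ ∂μ = ∫ x, φ x ∂μ := by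
  rw [← integral_integral_swap (integrable_kernel_mul hG hG0 hrow hφ)]
  simp only [integral_mul_const, hrow, one_mul]

theorem integral_sq_integral_kernel_mul_le [SFinite μ]
    (hG : AEStronglyMeasurable (uncurry G) (μ.prod μ)) (hG0 : ∀ x y, 0 ≤ G x y)
    (hcol : ∀ y, ∫ x, G x y ∂μ = 1) (hrow : ∀ x, ∫ y, G x y ∂μ = 1)
    {φ : X → ℝ} (hφ : Integrable φ μ) (hφ2 : Integrable (fun x => φ x ^ 2) μ) :
    ∫ y, (∫ x, G x y * φ x ∂μ) ^ 2 ∂μ ≤ ∫ x, φ x ^ 2 ∂μ := by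
  have hGφ := integrable_kernel_mul hG hG0 hrow hφ
  have hGφ2 := integrable_kernel_mul hG hG0 hrow hφ2
  calc ∫ y, (∫ x, G x y * φ x ∂μ) ^ 2 ∂μ
      ≤ ∫ y, ∫ x, G x y * φ x ^ 2 ∂μ ∂μ := by
        refine integral_mono_of_nonneg (ae_of_all _ fun y => sq_nonneg _)
          hGφ2.integral_prod_right ?_
        filter_upwards [hGφ.prod_left_ae, hGφ2.prod_left_ae] with y hy hy2
        exact sq_integral_mul_le_integral_mul_sq (hG0 · y) (hcol y) hy hy2
    _ = ∫ x, φ x ^ 2 ∂μ := integral_integral_kernel_mul hG hG0 hrow hφ2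

theorem integral_sq_integral_kernel_mul_sub_const_le [IsFiniteMeasure μ]
    (hG : AEStronglyMeasurable (uncurry G) (μ.prod μ)) (hG0 : ∀ x y, 0 ≤ G x y)
    (hcol : ∀ y, ∫ x, G x y ∂μ = 1) (hrow : ∀ x, ∫ y, G x y ∂μ = 1) {φ : X → ℝ}
    (hφ : MemLp φ 2 μ) (c : ℝ) :
    ∫ y, (∫ x, G x y * φ x ∂μ - c) ^ 2 ∂μ ≤ ∫ x, (φ x - c) ^ 2 ∂μ := by
  have hφc : MemLp (fun x => φ x - c) 2 μ := hφ.sub (memLp_const c)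
  have h_shift : ∀ᵐ y ∂μ, ∫ x, G x y * φ x ∂μ - c = ∫ x, G x y * (φ x - c) ∂μ := by
    filter_upwards [(integrable_kernel_mul hG hG0 hrow (hφ.integrable one_le_two)).prod_left_ae]
      with y hy
    simp only [mul_sub]
    rw [integral_sub hy ((integrable_of_integral_eq_one (hcol y)).mul_const c), integral_mul_const,
      hcol y, one_mul]
  rw [integral_congr_ae (h_shift.mono fun y hy => by rw [hy])]
  exact integral_sq_integral_kernel_mul_le hG hG0 hcol hrow (hφc.integrable one_le_two)
    hφc.integrable_sq

end DoublyStochasticKernel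

/-- With constant meeting rates, frictions preserve the mean and reduce the
variance of the firm size distribution. -/
theorem frictions_reduce_variance (r : ℝ) (hr : 0 < r) (ℓ : ℝ → ℝ)
    (hl : MemLp ℓ 2 (volume.restrict (Set.Icc (0:ℝ) 1)))
    (s : ℝ → ℝ)
    (hs : ∀ y, s y =
      ∫ x in (0:ℝ)..1, r * (r + 1) * ℓ x / (r + 2 * circleDist x y) ^ 2)
    (m : ℝ) (hm : m = ∫ x in (0:ℝ)..1, ℓ x) :
    (∫ y in (0:ℝ)..1, s y) = (∫ x in (0:ℝ)..1, ℓ x) ∧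
    (∫ y in (0:ℝ)..1, (s y - m) ^ 2) ≤ ∫ x in (0:ℝ)..1, (ℓ x - m) ^ 2 := by
  set μ := volume.restrict (Set.Ioc (0 : ℝ) 1)
  set G : ℝ → ℝ → ℝ := fun x y => frictionKernel r (circleDist x y)
  have hG : AEStronglyMeasurable (uncurry G) (μ.prod μ) :=
    ((continuousOn_frictionKernel hr).comp_continuous continuous_circleDist
      fun p => circleDist_nonneg p.1 p.2).aestronglyMeasurable
  have hG0 : ∀ x y, 0 ≤ G x y := fun x y => frictionKernel_nonneg hr.le _
  have hcol : ∀ y, ∫ x, G x y ∂μ = 1 := fun y => by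
    rw [← intervalIntegral.integral_of_le zero_le_one, integral_frictionKernel_circleDist hr]
  have hrow : ∀ x, ∫ y, G x y ∂μ = 1 := fun x => by
    simpa only [G, circleDist_comm] using hcol x
  have hℓ : MemLp ℓ 2 μ := hl.mono_measure (Measure.restrict_mono Set.Ioc_subset_Icc_self le_rfl)
  have hs' : ∀ y, s y = ∫ x, G x y * ℓ x ∂μ := fun y => by
    rw [hs, intervalIntegral.integral_of_le zero_le_one]
    congr 1 with x
    rw [mul_div_right_comm]
    rfl
  simp only [intervalIntegral.integral_of_le zero_le_one, hs'] at hm ⊢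
  exact ⟨integral_integral_kernel_mul hG hG0 hrow (hℓ.integrable one_le_two),
    hm ▸ integral_sq_integral_kernel_mul_sub_const_le hG hG0 hcol hrow hℓ m⟩
end
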